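/- For the single-cell uplink power-control game with cost J_i(α, x) = α_i x_i − β_i log(1 + s_i(x)), s_i(x) = h_i x_i/((1/L)(Σ_{j≠i} h_j x_j + σ²)), the interior first-order Nash conditions are equivalent to the linear system A x* = c, where A_{ii} = 1, A_{ij} = h_j/(L h_i) for i ≠ j, and c_i = β_i/α_i − σ²/(L h_i). Hence if A is invertible, the interior Nash equilibrium is unique and equals A⁻¹c. -/

import Mathlib

open Matrix Finset

/-- in the uplink power-control game with cost
`J_i(α,x) = α_i x_i - β_i log(1 + s_i(x))`, `s_i(x) = L h_i x_i/(Σ_{j≠i} h_j x_j + σ²)`,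
the interior first-order Nash conditions are equivalent to the linear system `A x = c` with
`A_{ii} = 1`, `A_{ij} = h_j/(L h_i)`, `c_i = β_i/α_i - σ²/(L h_i)`; hence if `A` is
invertible, the interior Nash equilibrium is unique and equals `A⁻¹ c`. -/
theorem stmt11 {N : ℕ} (h β α : Fin N → ℝ) (σsq L : ℝ)
    (hh : ∀ i, 0 < h i) (hβ : ∀ i, 0 < β i) (hα : ∀ i, 0 < α i)
    (hσ : 0 < σsq) (hL : 0 < L)
    (s : Fin N → (Fin N → ℝ) → ℝ)
    (hs : ∀ i (x : Fin N → ℝ),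
      s i x = L * h i * x i / (∑ j ∈ Finset.univ.erase i, h j * x j + σsq))
    (J : Fin N → (Fin N → ℝ) → ℝ)
    (hJ : ∀ i (x : Fin N → ℝ), J i x = α i * x i - β i * Real.log (1 + s i x))
    (A : Matrix (Fin N) (Fin N) ℝ)
    (hA : ∀ i j, A i j = if i = j then 1 else h j / (L * h i))
    (c : Fin N → ℝ) (hc : ∀ i, c i = β i / α i - σsq / (L * h i))
    (x : Fin N → ℝ)
    (hden : ∀ i, 0 < ∑ j ∈ Finset.univ.erase i, h j * x j + σsq)
    (hlog : ∀ i, 0 < 1 + s i x) :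
    ((∀ i, deriv (fun t : ℝ => J i (Function.update x i t)) (x i) = 0)
        ↔ A.mulVec x = c) ∧
    (IsUnit A.det →
      ((∀ i, deriv (fun t : ℝ => J i (Function.update x i t)) (x i) = 0)
        ↔ x = A⁻¹.mulVec c)) := by
  have main : ∀ i, (deriv (fun t : ℝ => J i (Function.update x i t)) (x i) = 0
      ↔ A.mulVec x i = c i) := by
    intro i
    obtain ⟨D, hD⟩ : ∃ D : ℝ, D = ∑ j ∈ Finset.univ.erase i, h j * x j + σsq := ⟨_, rfl⟩
    have hDpos : 0 < D := hD ▸ hden i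
    have hDne : D ≠ 0 := ne_of_gt hDpos
    have hkey : (fun t : ℝ => J i (Function.update x i t))
        = fun t => α i * t - β i * Real.log (1 + L * h i * t / D) := by
      funext t
      rw [hJ, hs, Function.update_self]
      have : ∑ j ∈ Finset.univ.erase i, h j * Function.update x i t j
          = ∑ j ∈ Finset.univ.erase i, h j * x j := by
        apply Finset.sum_congr rfl
        intro j hj
        rw [Function.update_of_ne (Finset.ne_of_mem_erase hj)]
      rw [this, ← hD]
    have hgpos : 0 < 1 + L * h i * x i / D := by
      have := hlog i
      rwa [hs i x, ← hD] at this
    have hd1 : HasDerivAt (fun t : ℝ => 1 + L * h i * t / D) (L * h i / D) (x i) := by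
      have := (((hasDerivAt_id (x i)).const_mul (L * h i)).div_const D).const_add 1
      simpa using this
    have hd2 : HasDerivAt (fun t : ℝ => Real.log (1 + L * h i * t / D))
        ((L * h i / D) / (1 + L * h i * x i / D)) (x i) := hd1.log (ne_of_gt hgpos)
    have hd3 : HasDerivAt (fun t : ℝ => α i * t - β i * Real.log (1 + L * h i * t / D))
        (α i - β i * ((L * h i / D) / (1 + L * h i * x i / D))) (x i) := by
      have := ((hasDerivAt_id (x i)).const_mul (α i)).sub (hd2.const_mul (β i))
      exact this.congr_deriv (by ring)
    rw [hkey, hd3.deriv]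
    -- compute mulVec
    have hmul : A.mulVec x i = x i + (∑ j ∈ Finset.univ.erase i, h j * x j) / (L * h i) := by
      rw [Matrix.mulVec, dotProduct]
      rw [← Finset.add_sum_erase Finset.univ (fun j => A i j * x j) (Finset.mem_univ i)]
      rw [hA i i, if_pos rfl, one_mul]
      congr 1
      rw [Finset.sum_div]
      apply Finset.sum_congr rfl
      intro j hj
      rw [hA i j, if_neg (Ne.symm (Finset.ne_of_mem_erase hj))]
      ring
    have hSeq : ∑ j ∈ Finset.univ.erase i, h j * x j = D - σsq := by rw [hD]; ring
    rw [hmul, hSeq, hc]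
    have hLh : L * h i ≠ 0 := mul_ne_zero (ne_of_gt hL) (ne_of_gt (hh i))
    have hαne : α i ≠ 0 := ne_of_gt (hα i)
    have hgne : 1 + L * h i * x i / D ≠ 0 := ne_of_gt hgpos
    have hEne : D + L * h i * x i ≠ 0 := by
      have : 1 + L * h i * x i / D = (D + L * h i * x i) / D := by field_simp
      rw [this] at hgpos
      exact ne_of_gt ((div_pos_iff.mp hgpos).resolve_right (fun ⟨_, h2⟩ => absurd hDpos (not_lt.mpr h2.le))).1
    have hsimp : L * h i / D / (1 + L * h i * x i / D) = L * h i / (D + L * h i * x i) := by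
      field_simp
    rw [hsimp, sub_eq_zero]
    have hhne : h i ≠ 0 := ne_of_gt (hh i)
    have hLne : L ≠ 0 := ne_of_gt hL
    constructor
    · intro heq
      have heq' : α i * (D + L * h i * x i) = β i * (L * h i) := by
        field_simp at heq
        linear_combination heq
      field_simp
      linear_combination heq'
    · intro heq
      have heq' : α i * (D + L * h i * x i) = β i * (L * h i) := by
        field_simp at heq
        have heq'' : (α i * (D + L * h i * x i)) * (L * h i) = (β i * (L * h i)) * (L * h i) := by
          linear_combination (L * h i) * heq
        exact mul_right_cancel₀ hLh heq''
      field_simp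
      linear_combination heq'
  have part1 : (∀ i, deriv (fun t : ℝ => J i (Function.update x i t)) (x i) = 0)
      ↔ A.mulVec x = c := by
    constructor
    · intro hAll; funext i; exact (main i).mp (hAll i)
    · intro hEq i; exact (main i).mpr (congrFun hEq i)
  refine ⟨part1, fun hdet => part1.trans ?_⟩
  constructor
  · intro hAx
    rw [← hAx, Matrix.mulVec_mulVec, Matrix.nonsing_inv_mul A hdet, Matrix.one_mulVec]
  · intro hx
    rw [hx, Matrix.mulVec_mulVec, Matrix.mul_nonsing_inv A hdet, Matrix.one_mulVec]
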